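/- arXiv:0707.0712 — 4 statements merged into one kernel-verified Lean document; each statement's English description precedes it below -/
import Mathlib

section
/- For any two n-by-n complex matrices A and B and integers 0 ≤ k < m, one has (m−k)·Tr[S_{m,k}(A,B)] = m·Tr[A·S_{m−1,k}(A,B)], i.e., Tr[S_{m,k}(A,B)] = (m/(m−k))·Tr[A·S_{m−1,k}(A,B)]. -/
/-- The `k`-th Hurwitz product `S_{m,k}(A,B)`: the sum of all words of length `m`
in `A` and `B` in which exactly `k` `B`'s appear. -/
noncomputable def hurwitz {R : Type*} [CommRing R] {n : ℕ} (m k : ℕ)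
    (A B : Matrix (Fin n) (Fin n) R) : Matrix (Fin n) (Fin n) R :=
  ∑ w ∈ Finset.univ.filter
      (fun w : Fin m → Bool => (Finset.univ.filter (fun i => w i = true)).card = k),
    (List.ofFn (fun i => if w i then B else A)).prod

/-!
Put `p = A + tB` in `Mat[t]`, so that `S_{m,k}` is the coefficient of `t^k` in `p^m`.
Since `t` is central, the Leibniz rule gives the noncommutative Euler identity
`m p^m - t (p^m)' = ∑_{i<m} p^i (p - t p') p^(m-1-i) = ∑_{i<m} p^i A p^(m-1-i)`.
Its `t^k` coefficient on the left is `(m - k) S_{m,k}`; on the right each summand has,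
by cyclicity of the trace, the same trace as `A p^(m-1)`, whose `t^k` coefficient is
`A S_{m-1,k}`.
-/

open Finset Polynomial

theorem Fin.sum_pi_succ {β M : Type*} [Fintype β] [AddCommMonoid M] {m : ℕ}
    (f : (Fin (m + 1) → β) → M) :
    ∑ w, f w = ∑ b, ∑ w, f (Fin.cons b w) := by
  rw [← (Fin.consEquiv fun _ => β).sum_comp, Fintype.sum_prod_type]
  rfl

section Semiring

variable {S : Type*} [Semiring S]

theorem pow_C_add_X_mul_C (a b : S) (m : ℕ) :
    (C a + X * C b) ^ m = ∑ w : Fin m → Bool,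
      C (List.ofFn fun i => if w i then b else a).prod * X ^ #{i | w i = true} := by
  induction m with
  | zero => simp
  | succ m ih =>
    rw [pow_succ', ih, Fin.sum_pi_succ, Fintype.sum_bool, add_comm, add_mul, mul_sum, mul_sum]
    congr 1 <;> refine sum_congr rfl fun w _ => ?_ <;>
      simp only [List.ofFn_succ, List.prod_cons, Fin.card_filter_univ_succ, Fin.cons_zero,
        Fin.cons_succ, C_mul, Bool.false_eq_true, if_false, if_true, mul_assoc, pow_succ, X_mul]

theorem coeff_pow_C_add_X_mul_C (a b : S) (m k : ℕ) :
    ((C a + X * C b) ^ m).coeff k = ∑ w : Fin m → Bool with #{i | w i = true} = k,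
      (List.ofFn fun i => if w i then b else a).prod := by
  simp_rw [pow_C_add_X_mul_C, finsetSum_coeff, coeff_C_mul_X_pow, sum_filter, eq_comm]

theorem coeff_X_mul_derivative (p : S[X]) (k : ℕ) :
    (X * derivative p).coeff k = k • p.coeff k := by
  cases k with
  | zero => simp
  | succ k => rw [coeff_X_mul, coeff_derivative, nsmul_eq_mul']; push_cast; rfl

theorem derivative_pow_eq_sum (p : S[X]) (m : ℕ) :
    derivative (p ^ m) = ∑ i ∈ range m, p ^ i * derivative p * p ^ (m - 1 - i) := by
  induction m with
  | zero => simp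
  | succ m ih =>
    rw [pow_succ, derivative_mul, ih, sum_mul, sum_range_succ, Nat.add_sub_cancel, Nat.sub_self,
      pow_zero, mul_one]
    congr 1
    refine sum_congr rfl fun i hi => ?_
    rw [mul_assoc, ← pow_succ]
    congr 2
    have := mem_range.mp hi
    omega

theorem X_mul_derivative_pow_add_sum (a b : S) (m : ℕ) :
    X * derivative ((C a + X * C b) ^ m) +
        ∑ i ∈ range m, (C a + X * C b) ^ i * C a * (C a + X * C b) ^ (m - 1 - i) =
      m • (C a + X * C b) ^ m := by
  set p := C a + X * C b
  have hder : derivative p = C b := by simp [p]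
  have hsplit : ∀ i ∈ range m, p ^ i * p * p ^ (m - 1 - i) = p ^ m := fun i hi => by
    rw [← pow_succ, ← pow_add]
    congr 1
    have := mem_range.mp hi
    omega
  rw [derivative_pow_eq_sum, hder, mul_sum, ← sum_add_distrib, nsmul_eq_sum_const]
  refine sum_congr rfl fun i hi => ?_
  rw [← hsplit i hi, mul_add, add_mul, add_comm, mul_assoc, mul_assoc, mul_assoc, mul_assoc,
    (commute_X (p ^ i)).left_comm]

end Semiring

namespace Matrix

variable {ι R : Type*} [Fintype ι] [DecidableEq ι] [CommRing R]

theorem trace_coeff_mul_comm (p q : (Matrix ι ι R)[X]) (k : ℕ) :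
    trace ((p * q).coeff k) = trace ((q * p).coeff k) := by
  rw [coeff_mul, coeff_mul, ← Nat.sum_antidiagonal_swap, trace_sum, trace_sum]
  exact sum_congr rfl fun _ _ => trace_mul_comm _ _

theorem trace_coeff_sum_pow_mul_C_mul_pow (p : (Matrix ι ι R)[X]) (a : Matrix ι ι R)
    (m k : ℕ) :
    trace ((∑ i ∈ range m, p ^ i * C a * p ^ (m - 1 - i)).coeff k) =
      m • trace (a * (p ^ (m - 1)).coeff k) := by
  rw [finsetSum_coeff, trace_sum, nsmul_eq_sum_const]
  refine sum_congr rfl fun i hi => ?_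
  rw [mul_assoc, trace_coeff_mul_comm, mul_assoc, ← pow_add, coeff_C_mul]
  congr 4
  have := mem_range.mp hi
  omega

end Matrix

theorem coeff_pow_C_add_X_mul_C_eq_hurwitz {R : Type*} [CommRing R] {n : ℕ}
    (A B : Matrix (Fin n) (Fin n) R) (m k : ℕ) :
    ((C A + X * C B) ^ m).coeff k = hurwitz m k A B :=
  coeff_pow_C_add_X_mul_C A B m k

theorem trace_hurwitz_eq_general {n m k : ℕ}
    (A B : Matrix (Fin n) (Fin n) ℂ) :
    ((m : ℂ) - (k : ℂ)) * Matrix.trace (hurwitz m k A B) =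
      (m : ℂ) * Matrix.trace (A * hurwitz (m - 1) k A B) := by
  have euler := congrArg (fun p => Matrix.trace (p.coeff k))
    (X_mul_derivative_pow_add_sum A B m)
  simp only [coeff_add, Matrix.trace_add, coeff_X_mul_derivative, coeff_smul,
    Matrix.trace_smul, Matrix.trace_coeff_sum_pow_mul_C_mul_pow,
    coeff_pow_C_add_X_mul_C_eq_hurwitz] at euler
  simp only [nsmul_eq_mul] at euler
  linear_combination -euler

theorem trace_hurwitz_eq {n m k : ℕ} (hk : k < m)
    (A B : Matrix (Fin n) (Fin n) ℂ) :
    ((m : ℂ) - (k : ℂ)) * Matrix.trace (hurwitz m k A B) =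
      (m : ℂ) * Matrix.trace (A * hurwitz (m - 1) k A B) :=
  trace_hurwitz_eq_general A B
end

section
/- Let B be any real n-by-n matrix, let 0 ≤ k < m, and define f : [0,1]^{n−1} → ℝ by f(x₁,…,x_{n−1}) = Tr[S_{m,k}(diag(1,x₁,…,x_{n−1}), B)]. Suppose a = (a₁,…,a_{n−1}) ∈ [0,1]^{n−1} achieves the minimum of f over [0,1]^{n−1}. Let D = diag(1,d₁,…,d_{n−1}) where d_i = 0 if a_i = 0 and d_i = 1 otherwise, and let A' = diag(1,a₁,…,a_{n−1}). Then f(a₁,…,a_{n−1}) = Tr[S_{m,k}(A',B)] = (m/(m−k))·Tr[D·S_{m−1,k}(A',B)]. -/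
/-!
Write `φ(A) = Tr S_{m,k}(A, B)`. Differentiating a word in the direction `E` replaces one
`A`-letter by `E`; by cyclicity of the trace that letter can be moved to the front, and the
pairs (word, position of an `A`) correspond to the pairs (position, word of length `m - 1`)
by reading the word cyclically from the chosen position. Hence the derivative of `φ` in the
direction `E` is `m · Tr(E S_{m-1,k}(A, B))`, and `E = A` gives Euler's relation
`(m - k) φ(A) = m · Tr(A S_{m-1,k}(A, B))`. At a minimiser over the box every coordinate
`a_i ∈ (0, 1)` is critical, so the `i`-th diagonal entry of `S_{m-1,k}(A', B)` vanishes; thus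
`A'` may be replaced by `D` in `Tr(A' S_{m-1,k}(A', B))`.
-/

open Matrix Finset Function Topology

section Words

variable {α : Type*}

def wordLetters {m : ℕ} (A B : α) (w : Fin m → Bool) : Fin m → α :=
  fun i => if w i then B else A

def hurwitzWords (m k : ℕ) : Finset (Fin m → Bool) :=
  univ.filter fun w => #(univ.filter fun i => w i = true) = k

theorem mem_hurwitzWords {m k : ℕ} {w : Fin m → Bool} :
    w ∈ hurwitzWords m k ↔ #(univ.filter fun i => w i = true) = k := by
  simp [hurwitzWords]

theorem card_filter_false_of_mem_hurwitzWords {m k : ℕ} {w : Fin m → Bool}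
    (hw : w ∈ hurwitzWords m k) : #(univ.filter fun p => w p = false) = m - k := by
  rw [mem_hurwitzWords] at hw
  have := card_filter_add_card_filter_not (s := univ) fun p => w p = true
  simp only [Bool.not_eq_true, hw, card_univ, Fintype.card_fin] at this
  omega

theorem card_filter_true_eq_card_filter_true_add_succ {M : ℕ} (w : Fin (M + 1) → Bool)
    {p : Fin (M + 1)} (hp : w p = false) :
    #(univ.filter fun i => w i = true)
      = #(univ.filter fun j : Fin M => w (p + j.succ) = true) := by
  rw [card_filter, card_filter, ← Equiv.sum_comp (Equiv.addLeft p), Fin.sum_univ_succ]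
  simp only [Equiv.coe_addLeft, add_zero, hp, Bool.false_eq_true, if_false, zero_add]
  rfl

theorem List.ofFn_add_left_eq_rotate {M : ℕ} (g : Fin (M + 1) → α) (p : Fin (M + 1)) :
    List.ofFn (fun j => g (p + j)) = (List.ofFn g).rotate p := by
  refine List.ext_getElem (by simp) fun i _ _ => ?_
  simp only [List.getElem_ofFn, List.getElem_rotate, List.length_ofFn]
  congr 1
  ext
  simp [Fin.add_def, Nat.add_comm]

end Words

theorem Matrix.trace_diagonal_mul {R N : Type*} [NonUnitalNonAssocSemiring R] [Fintype N]
    [DecidableEq N] (v : N → R) (X : Matrix N N R) :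
    (diagonal v * X).trace = ∑ i, v i * X i i := by
  simp [trace, diagonal_mul]

section Trace

variable {R N : Type*} [CommRing R] [Fintype N] [DecidableEq N]

theorem hurwitz_eq_sum {n : ℕ} (m k : ℕ) (A B : Matrix (Fin n) (Fin n) R) :
    hurwitz m k A B = ∑ w ∈ hurwitzWords m k, (List.ofFn (wordLetters A B w)).prod :=
  rfl

theorem trace_list_prod_rotate (l : List (Matrix N N R)) (p : ℕ) :
    (l.rotate p).prod.trace = l.prod.trace := by
  rcases l with _ | ⟨x, xs⟩
  · simp
  · rw [← List.rotate_mod, List.rotate_eq_drop_append_take (Nat.mod_lt _ (by simp)).le,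
      List.prod_append, trace_mul_comm, ← List.prod_append, List.take_append_drop]

theorem trace_prod_ofFn_update {M : ℕ} (g : Fin (M + 1) → Matrix N N R) (p : Fin (M + 1))
    (C : Matrix N N R) :
    (List.ofFn (update g p C)).prod.trace
      = (C * (List.ofFn fun j : Fin M => g (p + j.succ)).prod).trace := by
  rw [← trace_list_prod_rotate _ p, ← List.ofFn_add_left_eq_rotate, List.ofFn_succ,
    List.prod_cons]
  simp

theorem sum_trace_prod_update_eq_mul_trace_mul_hurwitz {n : ℕ} (M k : ℕ)
    (A B C : Matrix (Fin n) (Fin n) R) :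
    ∑ w ∈ hurwitzWords (M + 1) k, ∑ p ∈ univ.filter (fun p => w p = false),
        (List.ofFn (update (wordLetters A B w) p C)).prod.trace
      = (M + 1 : R) * (C * hurwitz M k A B).trace := by
  have rhs : (M + 1 : R) * (C * hurwitz M k A B).trace = ∑ p : Fin (M + 1),
      ∑ v ∈ hurwitzWords M k, (C * (List.ofFn (wordLetters A B v)).prod).trace := by
    simp [hurwitz_eq_sum, mul_sum, trace_sum]
  simp_rw [rhs, trace_prod_ofFn_update, sum_sigma']
  -- `(w, p) ↦ (p, w read cyclically from just after p)`; the inverse puts `false` back at `p`.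
  refine sum_nbij' (fun x => ⟨x.2, fun j => x.1 (x.2 + j.succ)⟩)
    (fun y => ⟨fun i => (Fin.cons false y.2 : Fin (M + 1) → Bool) (i - y.1), y.1⟩)
    ?_ ?_ ?_ ?_ fun _ _ => rfl
  · rintro ⟨w, p⟩ h
    simp only [mem_sigma, mem_filter, mem_univ, true_and, mem_hurwitzWords] at h ⊢
    exact (card_filter_true_eq_card_filter_true_add_succ w h.2).symm.trans h.1
  · rintro ⟨p, v⟩ h
    simp only [mem_sigma, mem_filter, mem_univ, true_and, mem_hurwitzWords] at h ⊢
    refine ⟨?_, by simp⟩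
    rw [card_filter_true_eq_card_filter_true_add_succ _ (p := p) (by simp)]
    simpa using h
  · rintro ⟨w, p⟩ h
    simp only [mem_sigma, mem_filter, mem_univ, true_and] at h
    refine Sigma.ext (funext fun i => ?_) HEq.rfl
    obtain ⟨j, rfl⟩ : ∃ j, i = p + j := ⟨i - p, by simp⟩
    cases j using Fin.cases <;> simp [h.2]
  · rintro ⟨p, v⟩ -
    simp

theorem natCast_sub_mul_trace_hurwitz_succ {n : ℕ} (M k : ℕ) (A B : Matrix (Fin n) (Fin n) R) :
    ((M + 1 - k : ℕ) : R) * (hurwitz (M + 1) k A B).trace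
      = (M + 1 : R) * (A * hurwitz M k A B).trace := by
  rw [← sum_trace_prod_update_eq_mul_trace_mul_hurwitz M k A B A, hurwitz_eq_sum, trace_sum,
    mul_sum]
  refine sum_congr rfl fun w hw => ?_
  have hupdate : ∀ p ∈ univ.filter (fun p => w p = false),
      update (wordLetters A B w) p A = wordLetters A B w := fun p hp =>
    update_eq_self_iff.mpr (by simp_all [wordLetters])
  rw [sum_congr rfl fun p hp => by rw [hupdate p hp], sum_const,
    card_filter_false_of_mem_hurwitzWords hw, nsmul_eq_mul]

end Trace

theorem IsMinOn.isLocalMin_update {ι X β : Type*} [DecidableEq ι] [TopologicalSpace X]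
    [Preorder β] {S : ι → Set X} {g : (ι → X) → β} {a : ι → X}
    (hmin : IsMinOn g (Set.univ.pi S) a) (ha : a ∈ Set.univ.pi S) {i : ι} (hi : S i ∈ 𝓝 (a i)) :
    IsLocalMin (fun s => g (update a i s)) (a i) := by
  filter_upwards [hi] with s hs
  rw [update_eq_self]
  exact hmin ((Set.update_mem_pi_iff_of_mem ha).mpr fun _ => hs)

section Derivative

attribute [local instance] Matrix.linftyOpNormedAddCommGroup Matrix.linftyOpNormedSpace
  Matrix.linftyOpNormedRing Matrix.linftyOpNormedAlgebra

variable {𝕜 : Type*} [NontriviallyNormedField 𝕜]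

theorem hasDerivAt_list_prod_ofFn {𝔸 : Type*} [NormedRing 𝔸] [NormedAlgebra 𝕜 𝔸] {M : ℕ}
    {c : Fin M → 𝕜 → 𝔸} {c' : Fin M → 𝔸} {t : 𝕜} (h : ∀ i, HasDerivAt (c i) (c' i) t) :
    HasDerivAt (fun s => (List.ofFn (c · s)).prod)
      (∑ p, (List.ofFn (update (c · t) p (c' p))).prod) t := by
  induction M with
  | zero => simpa using hasDerivAt_const t (1 : 𝔸)
  | succ M ih =>
    simp only [List.ofFn_succ, List.prod_cons, Fin.sum_univ_succ]
    convert (h 0).mul (ih fun i => h i.succ) using 2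
    · rfl
    · simp
    · rw [mul_sum]
      refine sum_congr rfl fun p _ => ?_
      rw [update_of_ne (Fin.succ_ne_zero p).symm]
      exact congrArg (_ * List.prod ·) (congrArg List.ofFn
        (update_comp_eq_of_injective _ (Fin.succ_injective M) p _))

variable [CompleteSpace 𝕜]

theorem HasDerivAt.trace {N : Type*} [Fintype N] [DecidableEq N] {F : 𝕜 → Matrix N N 𝕜}
    {F' : Matrix N N 𝕜} {t : 𝕜} (h : HasDerivAt F F' t) :
    HasDerivAt (fun s => (F s).trace) F'.trace t :=
  (traceLinearMap N 𝕜 𝕜).toContinuousLinearMap.hasFDerivAt.comp_hasDerivAt t h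

theorem hasDerivAt_diagonal_update {N : Type*} [Fintype N] [DecidableEq N] (d : N → 𝕜) (i : N)
    (t : 𝕜) : HasDerivAt (fun s => diagonal (update d i s)) (diagonal (Pi.single i 1)) t :=
  (diagonalLinearMap N 𝕜 𝕜).toContinuousLinearMap.hasFDerivAt.comp_hasDerivAt t
    (hasDerivAt_update d i t)

theorem HasDerivAt.trace_hurwitz_succ {n M k : ℕ} {A : 𝕜 → Matrix (Fin n) (Fin n) 𝕜}
    {E : Matrix (Fin n) (Fin n) 𝕜} {t : 𝕜} (B : Matrix (Fin n) (Fin n) 𝕜)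
    (hA : HasDerivAt A E t) :
    HasDerivAt (fun s => (hurwitz (M + 1) k (A s) B).trace)
      ((M + 1 : 𝕜) * (E * hurwitz M k (A t) B).trace) t := by
  rw [← sum_trace_prod_update_eq_mul_trace_mul_hurwitz]
  simp only [hurwitz_eq_sum, trace_sum]
  refine .fun_sum fun w _ => ?_
  rw [← trace_sum]
  refine HasDerivAt.trace ?_
  have hletter (i : Fin (M + 1)) :
      HasDerivAt (fun s => wordLetters (A s) B w i) (if w i then 0 else E) t := by
    by_cases hw : w i <;> simp only [wordLetters, hw, if_true, Bool.false_eq_true, if_false]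
    exacts [hasDerivAt_const t B, hA]
  refine (hasDerivAt_list_prod_ofFn hletter).congr_deriv ?_
  rw [sum_filter]
  refine sum_congr rfl fun p _ => ?_
  by_cases hw : w p
  · rw [hw, if_pos rfl, if_neg (by decide)]
    exact List.prod_eq_zero (List.mem_ofFn.mpr ⟨p, update_self ..⟩)
  · simp [hw]

theorem hurwitz_apply_self_eq_zero_of_isLocalMin {n M k : ℕ} (B : Matrix (Fin n) (Fin n) ℝ)
    (d : Fin n → ℝ) (i : Fin n)
    (h : IsLocalMin (fun s => (hurwitz (M + 1) k (diagonal (update d i s)) B).trace) (d i)) :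
    hurwitz M k (diagonal d) B i i = 0 := by
  have hderiv := (hasDerivAt_diagonal_update d i (d i)).trace_hurwitz_succ (M := M) (k := k) B
  rw [update_eq_self] at hderiv
  simpa [trace_diagonal_mul, Pi.single_apply, Nat.cast_add_one_ne_zero] using
    h.hasDerivAt_eq_zero hderiv

end Derivative

theorem trace_hurwitz_min_singular {n m k : ℕ} (hk : k < m)
    (B : Matrix (Fin (n + 1)) (Fin (n + 1)) ℝ)
    (f : (Fin n → ℝ) → ℝ)
    (hf : f = fun x => Matrix.trace (hurwitz m k (Matrix.diagonal (Fin.cons 1 x)) B))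
    (a : Fin n → ℝ) (ha : ∀ i, a i ∈ Set.Icc (0 : ℝ) 1)
    (hmin : ∀ x : Fin n → ℝ, (∀ i, x i ∈ Set.Icc (0 : ℝ) 1) → f a ≤ f x)
    (A' : Matrix (Fin (n + 1)) (Fin (n + 1)) ℝ)
    (hA' : A' = Matrix.diagonal (Fin.cons 1 a))
    (D : Matrix (Fin (n + 1)) (Fin (n + 1)) ℝ)
    (hD : D = Matrix.diagonal (Fin.cons 1 (fun i => if a i = 0 then 0 else 1))) :
    f a = Matrix.trace (hurwitz m k A' B) ∧
      Matrix.trace (hurwitz m k A' B) =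
        ((m : ℝ) / ((m : ℝ) - (k : ℝ))) *
          Matrix.trace (D * hurwitz (m - 1) k A' B) := by
  subst hA' hD
  obtain ⟨M, rfl⟩ : ∃ M, m = M + 1 := ⟨m - 1, by omega⟩
  refine ⟨by rw [hf], ?_⟩
  rw [Nat.add_sub_cancel]
  set S := hurwitz M k (diagonal (Fin.cons 1 a)) B
  have hcrit (j : Fin n) (hj : a j ∈ Set.Ioo 0 1) : S j.succ j.succ = 0 := by
    refine hurwitz_apply_self_eq_zero_of_isLocalMin B _ _ ?_
    have := IsMinOn.isLocalMin_update (S := fun _ => Set.Icc (0 : ℝ) 1)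
      (isMinOn_iff.mpr fun x hx => hmin x fun i => hx i trivial) (fun i _ => ha i)
      (Filter.mem_of_superset (Ioo_mem_nhds hj.1 hj.2) Set.Ioo_subset_Icc_self)
    simpa [hf, Fin.cons_update] using this
  have htrace : (diagonal (Fin.cons 1 a) * S).trace
      = (diagonal (Fin.cons 1 fun i => if a i = 0 then 0 else 1) * S).trace := by
    simp only [trace_diagonal_mul, Fin.sum_univ_succ, Fin.cons_zero, Fin.cons_succ]
    congr 1
    refine sum_congr rfl fun j _ => ?_
    rcases (ha j).1.eq_or_lt with h0 | h0
    · simp [← h0]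
    rcases (ha j).2.eq_or_lt with h1 | h1
    · simp [h1]
    · simp [hcrit j ⟨h0, h1⟩]
  have heuler := natCast_sub_mul_trace_hurwitz_succ M k (diagonal (Fin.cons 1 a)) B
  rw [htrace, Nat.cast_sub hk.le] at heuler
  have hpos : (0 : ℝ) < M + 1 - k := by
    have : (k : ℝ) < M + 1 := by exact_mod_cast hk
    linarith
  push_cast at heuler ⊢
  rw [div_mul_eq_mul_div, eq_div_iff hpos.ne']
  linarith
end

section
/- Fix n and m ≥ 1. Suppose that the polynomial Tr[(A+tB)^{m−1}] has all positive coefficients for every pair of n-by-n real symmetric positive definite matrices A and B. If p(t) = Tr[(A+tB)^m] has all positive coefficients whenever A and B are nonzero singular n-by-n real symmetric positive semidefinite matrices, then p(t) = Tr[(A+tB)^m] has all positive coefficients whenever A and B are arbitrary n-by-n real symmetric positive definite matrices. -/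
/-!
Let `a`, `b` be the smallest eigenvalues of `A`, `B`, so that `A - a` and `B - b` are singular
and positive semidefinite. Along the segment `t ↦ (A - t a, B - t b)`, `0 ≤ t ≤ 1`, the function
`g t = Tr S_{m,k}(A - t a, B - t b)` has derivative
`-m (a Tr S_{m-1,k} + b Tr S_{m-1,k-1})`, evaluated at the pair `(A - t a, B - t b)`, which is
positive definite for `t < 1`; so the derivative is negative and `g 0 > g 1`. Finally `g 1 ≥ 0`
by the singular case, or directly when `A - a` or `B - b` vanishes.

The derivative is computed in `ℝ[X]`: `Tr S_{m,k}(A, B)` is the coefficient of `X^k` in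
`Tr (A + X B)^m`, and moving along the segment subtracts from `A + X B` the scalar `t (a + b X)`,
which commutes with it, so the binomial theorem applies.
-/

open Polynomial Finset
open scoped Pointwise

section Words

variable {S : Type*} [Semiring S] {m : ℕ}

def wordProd (M N : S) (w : Fin m → Bool) : S :=
  (List.ofFn fun i => if w i then N else M).prod

def trueCount (w : Fin m → Bool) : ℕ :=
  (univ.filter fun i => w i = true).card

lemma trueCount_le (w : Fin m → Bool) : trueCount w ≤ m := by
  unfold trueCount
  simpa using card_filter_le univ fun i => w i = true

lemma trueCount_cons (b : Bool) (w : Fin m → Bool) :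
    trueCount (Fin.cons b w : Fin (m + 1) → Bool) = b.toNat + trueCount w := by
  rw [trueCount, trueCount, card_filter, card_filter, Fin.sum_univ_succ]
  cases b <;> simp

lemma wordProd_cons (M N : S) (b : Bool) (w : Fin m → Bool) :
    wordProd M N (Fin.cons b w : Fin (m + 1) → Bool) = (if b then N else M) * wordProd M N w := by
  simp [wordProd, List.ofFn_succ]

lemma add_smul_pow_eq_sum_wordProd {R : Type*} [CommSemiring R] [Algebra R S] (M N : S) (r : R) :
    ∀ m : ℕ, (M + r • N) ^ m = ∑ w : Fin m → Bool, r ^ trueCount w • wordProd M N w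
  | 0 => by simp [wordProd, trueCount]
  | m + 1 => by
    rw [pow_succ', add_smul_pow_eq_sum_wordProd M N r m,
      ← (Fin.consEquiv fun _ => Bool).sum_comp, Fintype.sum_prod_type, Fintype.sum_bool]
    simp only [Fin.consEquiv, Equiv.coe_fn_mk, trueCount_cons, wordProd_cons, Bool.toNat_true,
      Bool.toNat_false, if_true, Bool.false_eq_true, if_false, zero_add, pow_add, pow_one,
      mul_sum, ← sum_add_distrib]
    refine sum_congr rfl fun w _ => ?_
    rw [mul_smul_comm, add_mul, smul_mul_assoc, smul_add, smul_smul, mul_comm r, add_comm]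

end Words

section Pencil

variable {R : Type*} [CommRing R] {n : ℕ}

lemma hurwitz_eq_sum_wordProd (m k : ℕ) (A B : Matrix (Fin n) (Fin n) R) :
    hurwitz m k A B = ∑ w ∈ univ.filter (fun w : Fin m → Bool => trueCount w = k), wordProd A B w :=
  rfl

lemma hurwitz_eq_zero_of_lt {m k : ℕ} (h : m < k) (A B : Matrix (Fin n) (Fin n) R) :
    hurwitz m k A B = 0 :=
  sum_eq_zero fun w hw => by
    have hw : trueCount w = k := (mem_filter.mp hw).2
    have := trueCount_le w
    omega

noncomputable def constMatrix : Matrix (Fin n) (Fin n) R →ₐ[R] Matrix (Fin n) (Fin n) R[X] :=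
  (CAlgHom : R →ₐ[R] R[X]).mapMatrix

lemma trace_constMatrix (M : Matrix (Fin n) (Fin n) R) : (constMatrix M).trace = C M.trace := by
  rw [constMatrix, AlgHom.mapMatrix_apply, ← AddMonoidHom.map_trace]
  rfl

noncomputable def pencil (A B : Matrix (Fin n) (Fin n) R) : Matrix (Fin n) (Fin n) R[X] :=
  constMatrix A + (X : R[X]) • constMatrix B

theorem coeff_trace_pencil_pow (m k : ℕ) (A B : Matrix (Fin n) (Fin n) R) :
    ((pencil A B ^ m).trace).coeff k = (hurwitz m k A B).trace := by
  rw [pencil, add_smul_pow_eq_sum_wordProd, Matrix.trace_sum, finsetSum_coeff,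
    hurwitz_eq_sum_wordProd, Matrix.trace_sum, sum_filter]
  refine sum_congr rfl fun w _ => ?_
  have hword : wordProd (constMatrix A) (constMatrix B) w = constMatrix (wordProd A B w) := by
    simp only [wordProd, map_list_prod, List.map_ofFn, Function.comp_def, apply_ite]
  rw [hword, Matrix.trace_smul, trace_constMatrix, smul_eq_mul, mul_comm, coeff_C_mul_X_pow]
  exact if_congr eq_comm rfl rfl

lemma pencil_sub_smul (A B A₀ B₀ : Matrix (Fin n) (Fin n) R) (s : R) :
    pencil (A - s • A₀) (B - s • B₀) = pencil A B - s • pencil A₀ B₀ := by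
  simp only [pencil, map_sub, map_smul, smul_sub, smul_add, smul_comm s (X : R[X])]
  abel

lemma pencil_smul_one (a b : R) :
    pencil (a • 1 : Matrix (Fin n) (Fin n) R) (b • 1) = (C a + C b * X) • 1 := by
  simp only [pencil, map_smul, map_one, add_smul, mul_smul, ← algebraMap_smul R[X] a,
    ← algebraMap_smul R[X] b, algebraMap_eq, smul_comm (X : R[X])]

lemma pencil_zero_left (B : Matrix (Fin n) (Fin n) R) :
    pencil 0 B = (X : R[X]) • constMatrix B := by
  rw [pencil, map_zero, zero_add]

lemma pencil_zero_right (A : Matrix (Fin n) (Fin n) R) :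
    pencil A 0 = constMatrix A := by
  rw [pencil, map_zero, smul_zero, add_zero]

end Pencil

section Nonneg

variable {n : ℕ}

lemma trace_hurwitz_zero_left_nonneg {B : Matrix (Fin n) (Fin n) ℝ} (hB : B.PosSemidef) (m k : ℕ) :
    0 ≤ (hurwitz m k 0 B).trace := by
  rw [← coeff_trace_pencil_pow, pencil_zero_left, _root_.smul_pow, ← map_pow, Matrix.trace_smul,
    trace_constMatrix, smul_eq_mul, mul_comm, coeff_C_mul_X_pow]
  split_ifs
  exacts [(hB.pow m).trace_nonneg, le_rfl]

lemma trace_hurwitz_zero_right_nonneg {A : Matrix (Fin n) (Fin n) ℝ} (hA : A.PosSemidef) (m k : ℕ) :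
    0 ≤ (hurwitz m k A 0).trace := by
  rw [← coeff_trace_pencil_pow, pencil_zero_right, ← map_pow, trace_constMatrix, coeff_C]
  split_ifs
  exacts [(hA.pow m).trace_nonneg, le_rfl]

end Nonneg

theorem hasDerivAt_map_sub_smul_pow {𝕜 𝒜 : Type*} [NontriviallyNormedField 𝕜] [Ring 𝒜]
    [Algebra 𝕜 𝒜] (L : 𝒜 →ₗ[𝕜] 𝕜) {P U : 𝒜} (hUP : Commute U P) (m : ℕ) (s : 𝕜) :
    HasDerivAt (fun t : 𝕜 => L ((P - t • U) ^ (m + 1)))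
      (-((m : 𝕜) + 1) * L (U * (P - s • U) ^ m)) s := by
  have expand : ∀ (V : 𝒜) (j : ℕ) (t : 𝕜), L (V * (P - t • U) ^ j)
      = ∑ i ∈ range (j + 1), (j.choose i : 𝕜) * (-1) ^ i * L (V * U ^ i * P ^ (j - i)) * t ^ i := by
    intro V j t
    have hcomm : Commute (-(t • U)) P := (hUP.smul_left t).neg_left
    rw [← neg_add_eq_sub, hcomm.add_pow, mul_sum, map_sum]
    refine sum_congr rfl fun i _ => ?_
    rw [← neg_smul, _root_.smul_pow, ← nsmul_eq_mul', ← Nat.cast_smul_eq_nsmul 𝕜, smul_mul_assoc,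
      mul_smul_comm, mul_smul_comm, map_smul, map_smul, neg_pow, smul_eq_mul, smul_eq_mul,
      mul_assoc V]
    ring
  have hfun : (fun t : 𝕜 => L ((P - t • U) ^ (m + 1))) = fun t => ∑ i ∈ range (m + 1 + 1),
      ((m + 1).choose i : 𝕜) * (-1) ^ i * L (1 * U ^ i * P ^ (m + 1 - i)) * t ^ i :=
    funext fun t => by rw [← one_mul ((P - t • U) ^ (m + 1)), expand]
  rw [hfun]
  refine (HasDerivAt.fun_sum fun i _ => (hasDerivAt_pow i s).const_mul _).congr_deriv ?_
  rw [expand U m s, sum_range_succ', mul_sum, Nat.cast_zero, zero_mul, mul_zero, add_zero]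
  refine sum_congr rfl fun i _ => ?_
  have hchoose : ((m : 𝕜) + 1) * m.choose i = (m + 1).choose (i + 1) * ((i : 𝕜) + 1) := by
    simpa using congrArg (Nat.cast : ℕ → 𝕜) (Nat.add_one_mul_choose_eq m i)
  rw [pow_succ' U, one_mul, Nat.add_sub_add_right, add_tsub_cancel_right]
  push_cast
  linear_combination (-1) ^ i * L (U * U ^ i * P ^ (m - i)) * s ^ i * hchoose

lemma coeff_linear_mul_pos {R : Type*} [CommRing R] [LinearOrder R] [IsStrictOrderedRing R]
    {a b : R} (ha : 0 < a) (hb : 0 < b) {q : R[X]} {d k : ℕ} (hk : k ≤ d + 1)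
    (hq : ∀ j, 0 ≤ q.coeff j) (hq_pos : ∀ j ≤ d, 0 < q.coeff j) :
    0 < ((C a + C b * X) * q).coeff k := by
  rw [add_mul, coeff_add, coeff_C_mul, mul_assoc, coeff_C_mul]
  cases k with
  | zero => simpa using mul_pos ha (hq_pos 0 d.zero_le)
  | succ j =>
    rw [coeff_X_mul]
    exact add_pos_of_nonneg_of_pos (mul_nonneg ha.le (hq _)) (mul_pos hb (hq_pos j (by omega)))

lemma Matrix.PosSemidef.posDef_sub_smul_one {ι : Type*} [DecidableEq ι] {N : Matrix ι ι ℝ}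
    {a c : ℝ} (hN : (N - a • 1).PosSemidef) (hc : c < a) : (N - c • 1).PosDef := by
  have h : N - c • 1 = (N - a • 1) + (a - c) • 1 := by rw [sub_smul]; abel
  rw [h]
  exact Matrix.PosDef.posSemidef_add hN (Matrix.PosDef.one.smul (sub_pos.mpr hc))

lemma Matrix.PosDef.exists_posSemidef_sub_smul_one_det_eq_zero {ι : Type*} [Fintype ι]
    [DecidableEq ι] [Nonempty ι] {N : Matrix ι ι ℝ} (hN : N.PosDef) :
    ∃ a : ℝ, 0 < a ∧ (N - a • 1).PosSemidef ∧ (N - a • 1).det = 0 := by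
  obtain ⟨i₀, hmin⟩ := Finite.exists_min hN.1.eigenvalues
  set a := hN.1.eigenvalues i₀
  have hspec : spectrum ℝ (N - a • 1) = spectrum ℝ N - ({a} : Set ℝ) := by
    rw [spectrum.sub_singleton_eq, Algebra.algebraMap_eq_smul_one]
  have hH : (N - a • 1).IsHermitian := hN.1.sub (Matrix.isHermitian_one.smul (.all a))
  refine ⟨a, hN.eigenvalues_pos i₀, hH.posSemidef_iff_eigenvalues_nonneg.mpr fun i => ?_, ?_⟩
  · obtain ⟨x, hx, _, rfl, hxi⟩ :=
      (hspec ▸ hH.eigenvalues_mem_spectrum_real i : _ ∈ spectrum ℝ N - ({a} : Set ℝ))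
    obtain ⟨j, rfl⟩ := hN.1.spectrum_real_eq_range_eigenvalues ▸ hx
    simpa [← hxi] using hmin j
  · have h0 : (0 : ℝ) ∈ spectrum ℝ (N - a • 1) :=
      hspec ▸ ⟨a, hN.1.eigenvalues_mem_spectrum_real i₀, a, rfl, sub_self a⟩
    rw [spectrum.zero_mem_iff, Matrix.isUnit_iff_isUnit_det, isUnit_iff_ne_zero, not_not] at h0
    exact h0

theorem trace_hurwitz_sub_smul_one_lt {n m k : ℕ} (hk : k ≤ m + 1)
    (hprev : ∀ A B : Matrix (Fin n) (Fin n) ℝ, A.PosDef → B.PosDef →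
      ∀ k ≤ m, 0 < (hurwitz m k A B).trace)
    {A B : Matrix (Fin n) (Fin n) ℝ} {a b : ℝ} (ha : 0 < a) (hb : 0 < b)
    (hA : (A - a • 1).PosSemidef) (hB : (B - b • 1).PosSemidef) :
    (hurwitz (m + 1) k (A - a • 1) (B - b • 1)).trace < (hurwitz (m + 1) k A B).trace := by
  set L := (lcoeff ℝ k).comp (Matrix.traceLinearMap (Fin n) ℝ ℝ[X])
  set U := pencil (a • 1 : Matrix (Fin n) (Fin n) ℝ) (b • 1)
  have hU : U = (C a + C b * X) • 1 := pencil_smul_one a b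
  have hUP : Commute U (pencil A B) := hU ▸ (Commute.one_left _).smul_left _
  have hg : ∀ t : ℝ, L ((pencil A B - t • U) ^ (m + 1))
      = (hurwitz (m + 1) k (A - t • a • 1) (B - t • b • 1)).trace := fun t => by
    rw [← pencil_sub_smul]
    exact coeff_trace_pencil_pow _ _ _ _
  have hderiv := hasDerivAt_map_sub_smul_pow L hUP m
  obtain ⟨ξ, ⟨hξ0, hξ1⟩, hslope⟩ := exists_hasDerivAt_eq_slope _ _ zero_lt_one
    (fun t _ => (hderiv t).continuousAt.continuousWithinAt) (fun t _ => hderiv t)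
  have hpos : 0 < L (U * (pencil A B - ξ • U) ^ m) := by
    rw [← pencil_sub_smul, hU, smul_one_mul, smul_smul, smul_smul]
    have hAξ := hA.posDef_sub_smul_one (mul_lt_of_lt_one_left ha hξ1)
    have hBξ := hB.posDef_sub_smul_one (mul_lt_of_lt_one_left hb hξ1)
    have hq_pos : ∀ j ≤ m, 0 < (hurwitz m j (A - (ξ * a) • 1) (B - (ξ * b) • 1)).trace :=
      hprev _ _ hAξ hBξ
    have hq : ∀ j, 0 ≤ (hurwitz m j (A - (ξ * a) • 1) (B - (ξ * b) • 1)).trace := fun j => by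
      rcases le_or_gt j m with hj | hj
      · exact (hq_pos j hj).le
      · rw [hurwitz_eq_zero_of_lt hj, Matrix.trace_zero]
    simp only [← coeff_trace_pencil_pow] at hq hq_pos
    simpa only [L, LinearMap.comp_apply, Matrix.traceLinearMap_apply, Matrix.trace_smul,
      smul_eq_mul, lcoeff_apply] using coeff_linear_mul_pos ha hb hk hq hq_pos
  have h0 := hg 0
  have h1 := hg 1
  simp only [zero_smul, sub_zero, one_smul, div_one] at h0 h1 hslope
  have hrate : 0 < ((m : ℝ) + 1) * L (U * (pencil A B - ξ • U) ^ m) :=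
    mul_pos (by positivity) hpos
  rw [← h0, ← h1]
  linarith

theorem reduction_to_singular_case {n m : ℕ} (hm : 1 ≤ m)
    (hprev : ∀ A B : Matrix (Fin n) (Fin n) ℝ, A.PosDef → B.PosDef →
      ∀ k ≤ m - 1, 0 < Matrix.trace (hurwitz (m - 1) k A B))
    (hsing : ∀ A B : Matrix (Fin n) (Fin n) ℝ, A.PosSemidef → B.PosSemidef →
      A ≠ 0 → B ≠ 0 → A.det = 0 → B.det = 0 →
      ∀ k ≤ m, 0 < Matrix.trace (hurwitz m k A B)) :
    ∀ A B : Matrix (Fin n) (Fin n) ℝ, A.PosDef → B.PosDef →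
      ∀ k ≤ m, 0 < Matrix.trace (hurwitz m k A B) := by
  intro A B hA hB k hk
  obtain ⟨m, rfl⟩ := Nat.exists_eq_add_of_le' hm
  rw [Nat.add_sub_cancel] at hprev
  cases isEmpty_or_nonempty (Fin n) with
  | inl _ =>
    have := hprev 1 1 Matrix.PosDef.one Matrix.PosDef.one 0 m.zero_le
    simp [Matrix.trace] at this
  | inr _ =>
    obtain ⟨a, ha, hA', hAdet⟩ := hA.exists_posSemidef_sub_smul_one_det_eq_zero
    obtain ⟨b, hb, hB', hBdet⟩ := hB.exists_posSemidef_sub_smul_one_det_eq_zero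
    refine lt_of_le_of_lt ?_ (trace_hurwitz_sub_smul_one_lt hk hprev ha hb hA' hB')
    by_cases hA0 : A - a • 1 = 0
    · rw [hA0]
      exact trace_hurwitz_zero_left_nonneg hB' _ _
    by_cases hB0 : B - b • 1 = 0
    · rw [hB0]
      exact trace_hurwitz_zero_right_nonneg hA' _ _
    exact (hsing _ _ hA' hB' hA0 hB0 hAdet hBdet k hk).le
end

section
/- Let r, x, y, z, u, b be nonnegative real numbers with b > 0 and u > 0. Let A = diag(1, r, 0) and let B be the real symmetric 3-by-3 matrix with rows ((x²+u²)/b, x, −z), (x, b, y), (−z, y, (x²y² + u²y² + 2xbzy + z²b²)/(u²b)). Then b³u²·Tr[S_{6,3}(A,B)] + 12·b³u²·x·y·z·(r² + r + 1) ≥ 0; that is, the only negative terms of the polynomial p(r,x,y,z,u,b) = b³u²·Tr[S_{6,3}(A,B)] are −12·b³u²·x·z·y·(r² + r + 1). -/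
theorem card_filter_cons_eq_true {m : ℕ} (b : Bool) (w : Fin m → Bool) :
    (Finset.univ.filter (fun i => (Fin.cons b w : Fin (m + 1) → Bool) i = true)).card =
      (Finset.univ.filter (fun i => w i = true)).card + b.toNat := by
  simp only [Finset.card_filter, Fin.sum_univ_succ, Fin.cons_zero, Fin.cons_succ]
  cases b <;> simp [add_comm]

theorem sum_bool_tuple_succ {M : Type*} [AddCommMonoid M] {m : ℕ}
    (f : (Fin (m + 1) → Bool) → M) :
    ∑ w, f w = ∑ w : Fin m → Bool, f (Fin.cons false w) + ∑ w : Fin m → Bool, f (Fin.cons true w) := by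
  rw [← (Fin.consEquiv fun _ => Bool).sum_comp, Fintype.sum_prod_type, Fintype.sum_bool, add_comm]
  rfl

section Hurwitz

variable {R : Type*} [CommRing R] {n : ℕ} (A B : Matrix (Fin n) (Fin n) R)

theorem hurwitz_eq_sum_ite (m k : ℕ) :
    hurwitz m k A B = ∑ w : Fin m → Bool,
      if (Finset.univ.filter (fun i => w i = true)).card = k then
        (List.ofFn (fun i => if w i then B else A)).prod else 0 :=
  Finset.sum_filter _ _

theorem hurwitz_zero_succ (k : ℕ) : hurwitz 0 (k + 1) A B = 0 := by
  simp [hurwitz_eq_sum_ite]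

theorem hurwitz_succ_zero (m : ℕ) : hurwitz (m + 1) 0 A B = A * hurwitz m 0 A B := by
  simp only [hurwitz_eq_sum_ite, sum_bool_tuple_succ, card_filter_cons_eq_true, List.ofFn_succ,
    Fin.cons_zero, Fin.cons_succ, List.prod_cons, Finset.mul_sum, mul_ite, mul_zero]
  simp

theorem hurwitz_zero_right (m : ℕ) : hurwitz m 0 A B = A ^ m := by
  induction m with
  | zero => simp [hurwitz_eq_sum_ite]
  | succ m ih => rw [hurwitz_succ_zero, ih, pow_succ']

theorem hurwitz_succ_succ (m k : ℕ) :
    hurwitz (m + 1) (k + 1) A B = A * hurwitz m (k + 1) A B + B * hurwitz m k A B := by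
  simp only [hurwitz_eq_sum_ite, sum_bool_tuple_succ, card_filter_cons_eq_true, List.ofFn_succ,
    Fin.cons_zero, Fin.cons_succ, List.prod_cons, Finset.mul_sum, mul_ite, mul_zero]
  simp

end Hurwitz

theorem trace_hurwitz_six_three_eq (r x y z u b : ℝ) (hu : u ≠ 0) (hb : b ≠ 0) :
    b ^ 3 * u ^ 2 * Matrix.trace (hurwitz 6 3 !![1, 0, 0; 0, r, 0; 0, 0, 0]
      !![(x ^ 2 + u ^ 2) / b, x, -z;
          x, b, y;
          -z, y, (x ^ 2 * y ^ 2 + u ^ 2 * y ^ 2 + 2 * x * b * z * y +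
            z ^ 2 * b ^ 2) / (u ^ 2 * b)]) +
      12 * b ^ 3 * u ^ 2 * x * y * z * (r ^ 2 + r + 1) =
    20*u^8 + 24*z^2*u^4*b^2 + 6*z^4*b^4 + 6*y^2*z^2*u^2*b^2 + 12*x*y*z^3*b^3 + 6*x^2*u^2*b^4
      + 24*x^2*u^4*b^2 + 60*x^2*u^6 + 24*x^2*z^2*u^2*b^2 + 6*x^2*y^2*z^2*b^2 + 24*x^4*u^2*b^2
      + 60*x^4*u^4 + 20*x^6*u^2 + 12*r*x^2*u^2*b^4 + 18*r*x^2*u^4*b^2 + 18*r*x^4*u^2*b^2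
      + 18*r^2*x^2*u^2*b^4 + 12*r^2*x^2*u^4*b^2 + 12*r^2*x^4*u^2*b^2 + 20*r^3*u^2*b^6
      + 24*r^3*y^2*u^2*b^4 + 6*r^3*y^4*u^2*b^2 + 12*r^3*x*y^3*z*b^3 + 24*r^3*x^2*u^2*b^4
      + 6*r^3*x^2*y^4*b^2 + 6*r^3*x^4*u^2*b^2 + 6*r^3*(x*u^2*b - y*z*b^2)^2 := by
  simp only [hurwitz_succ_succ, hurwitz_zero_right, hurwitz_zero_succ, pow_succ, pow_zero,
    one_mul, mul_zero, add_zero]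
  simp only [Matrix.mul_fin_three, Matrix.of_add_of, Matrix.cons_add_cons, Matrix.empty_add_empty,
    Matrix.trace_fin_three_of, mul_zero, zero_mul, add_zero, zero_add, mul_one, one_mul]
  field_simp
  ring

theorem negative_terms_bound (r x y z u b : ℝ)
    (hr : 0 ≤ r) (hx : 0 ≤ x) (hy : 0 ≤ y) (hz : 0 ≤ z) (hu : 0 < u) (hb : 0 < b)
    (A : Matrix (Fin 3) (Fin 3) ℝ) (hA : A = Matrix.diagonal ![1, r, 0])
    (B : Matrix (Fin 3) (Fin 3) ℝ)
    (hB : B = !![(x ^ 2 + u ^ 2) / b, x, -z;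
                  x, b, y;
                  -z, y, (x ^ 2 * y ^ 2 + u ^ 2 * y ^ 2 + 2 * x * b * z * y +
                    z ^ 2 * b ^ 2) / (u ^ 2 * b)]) :
    0 ≤ b ^ 3 * u ^ 2 * Matrix.trace (hurwitz 6 3 A B) +
        12 * b ^ 3 * u ^ 2 * x * y * z * (r ^ 2 + r + 1) := by
  rw [hA, Matrix.diagonal_vec3, hB, trace_hurwitz_six_three_eq r x y z u b hu.ne' hb.ne']
  positivity
end
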